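/- Let k ≥ 2 and q ≥ 1 be integers. The map φ restricted to W_{k,q} is a graph isomorphism from G''_k onto G_k: it is a bijection from W_{k,q} onto Δ_{k,q} ∩ ℤ^k, and for all distinct w¹, w² ∈ W_{k,q}, {w¹, w²} is an edge of G''_k if and only if {φ(w¹), φ(w²)} is an edge of G_k. -/

import Mathlib

/-!
`φ` is the discrete derivative of the padded sequence `(0, y₁, …, y_{k-1}, q)` and `ψ`, taking
prefix sums, inverts it; this gives the bijection. For `w¹, w² ∈ W_{k,q}` the difference
`d = φ(w¹) - φ(w²)` has prefix sums `0, w¹ - w², 0`. A vector with entries in `{-1, 0, 1}`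
alternates in sign exactly when its prefix sums stay in `{0, 1}` or in `{-1, 0}`, and the
balance condition of `G_k` is automatic because `d` sums to `0`.
-/

open Finset

/-- Membership in the discrete simplex `Δ_{k,q} ∩ ℤ^k`:
integer vectors with nonnegative entries summing to `q`. -/
def inSimplex (k q : ℕ) (v : Fin k → ℤ) : Prop :=
  (∀ i, 0 ≤ v i) ∧ (∑ i, v i) = (q : ℤ)

/-- The nonzero entries of `d`, read from left to right, alternate in sign. -/
def AltSign {k : ℕ} (d : Fin k → ℤ) : Prop :=
  ∀ i j : Fin k, i < j → d i ≠ 0 → d j ≠ 0 →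
    (∀ l : Fin k, i < l → l < j → d l = 0) → d i = - d j

/-- Adjacency in the graph `G_k` on `Δ_{k,q} ∩ ℤ^k`. -/
def AdjG (k q : ℕ) (v w : Fin k → ℤ) : Prop :=
  v ≠ w ∧ inSimplex k q v ∧ inSimplex k q w ∧
    (∀ i, v i - w i = -1 ∨ v i - w i = 0 ∨ v i - w i = 1) ∧
    (Finset.univ.filter (fun i => v i - w i = 1)).card =
      (Finset.univ.filter (fun i => v i - w i = -1)).card ∧
    AltSign (fun i => v i - w i)

/-- A cell of the regular triangulation `𝒯` of `Δ_{k,q}`: a `k`-element subset of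
`Δ_{k,q} ∩ ℤ^k` whose elements are pairwise adjacent in `G_k`. -/
def IsCell (k q : ℕ) (S : Finset (Fin k → ℤ)) : Prop :=
  S.card = k ∧ (∀ v ∈ S, inSimplex k q v) ∧
    (∀ v ∈ S, ∀ w ∈ S, v ≠ w → AdjG k q v w)

/-- A Sperner labeling of `Δ_{k,q} ∩ ℤ^k`. -/
def IsSperner (k q : ℕ) (c : (Fin k → ℤ) → Fin k) : Prop :=
  ∀ v : Fin k → ℤ, inSimplex k q v → ∀ i : Fin k, v i = 0 → c v ≠ i

/-- A cell is non-monochromatic for `c` if `c` takes at least two values on it. -/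
def NonMono {k : ℕ} (c : (Fin k → ℤ) → Fin k) (S : Finset (Fin k → ℤ)) : Prop :=
  ∃ u ∈ S, ∃ v ∈ S, c u ≠ c v

/-- Membership in `W_{k,q} = R_{k,q} ∩ ℤ^{k-1}`. -/
def inW (k q : ℕ) (w : Fin (k-1) → ℤ) : Prop :=
  (∀ i, 0 ≤ w i) ∧ (∀ i, w i ≤ (q : ℤ)) ∧
    ∀ i j : Fin (k-1), i ≤ j → w i ≤ w j

/-- A permutation `π` of `{1,…,k-1}` (here `Fin (k-1)`) is consistent with `w`
if `w i = w (i+1)` implies `π i < π (i+1)`. -/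
def Consistent (k : ℕ) (w : Fin (k-1) → ℤ) (π : Equiv.Perm (Fin (k-1))) : Prop :=
  ∀ i j : Fin (k-1), (i : ℕ) + 1 = (j : ℕ) → w i = w j → π i < π j

/-- The simplex `σ(w,π) ⊆ ℝ^{k-1}`. -/
def simplexSet (k : ℕ) (w : Fin (k-1) → ℤ) (π : Equiv.Perm (Fin (k-1))) :
    Set (Fin (k-1) → ℝ) :=
  {y | (∀ i, 0 ≤ y i) ∧
    (∀ s, 0 ≤ y (π s) - (w (π s) : ℝ)) ∧
    (∀ s, y (π s) - (w (π s) : ℝ) ≤ 1) ∧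
    (∀ s t : Fin (k-1), s ≤ t →
      y (π s) - (w (π s) : ℝ) ≤ y (π t) - (w (π t) : ℝ))}

/-- Coercion of an integer vector to a real vector. -/
def toR {n : ℕ} (w : Fin n → ℤ) : Fin n → ℝ := fun i => (w i : ℝ)

/-- Adjacency in the graph `G'_k` on `W_{k,q}`. -/
def AdjG' (k q : ℕ) (w1 w2 : Fin (k-1) → ℤ) : Prop :=
  w1 ≠ w2 ∧ inW k q w1 ∧ inW k q w2 ∧
    ∃ w : Fin (k-1) → ℤ, ∃ π : Equiv.Perm (Fin (k-1)),
      inW k q w ∧ Consistent k w π ∧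
        toR w1 ∈ simplexSet k w π ∧ toR w2 ∈ simplexSet k w π

/-- Adjacency in the graph `G''_k` on `W_{k,q}`. -/
def AdjG'' (k q : ℕ) (w1 w2 : Fin (k-1) → ℤ) : Prop :=
  w1 ≠ w2 ∧ inW k q w1 ∧ inW k q w2 ∧
    ((∀ i, w1 i - w2 i = 0 ∨ w1 i - w2 i = 1) ∨
      (∀ i, w1 i - w2 i = -1 ∨ w1 i - w2 i = 0))

/-- Auxiliary extension of `y : Fin (k-1) → ℤ` to `ℕ`, taking value `q` beyond `k-2`. -/
def extW (k q : ℕ) (y : Fin (k-1) → ℤ) : ℕ → ℤ := fun n =>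
  if h : n < k - 1 then y ⟨n, h⟩ else (q : ℤ)

/-- The map `φ(y₁,…,y_{k-1}) = (y₁, y₂ - y₁, …, y_{k-1} - y_{k-2}, q - y_{k-1})`. -/
def phi (k q : ℕ) (y : Fin (k-1) → ℤ) : Fin k → ℤ := fun i =>
  extW k q y (i : ℕ) - (if (i : ℕ) = 0 then 0 else extW k q y ((i : ℕ) - 1))

/-- The map `ψ(x₁,…,x_k) = (x₁, x₁+x₂, …, x₁+⋯+x_{k-1})`. -/
def psi (k : ℕ) (x : Fin k → ℤ) : Fin (k-1) → ℤ := fun j =>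
  ∑ i ∈ Finset.univ.filter (fun i : Fin k => (i : ℕ) ≤ (j : ℕ)), x i

/-- Auxiliary extension of `y : Fin (k-1) → ℝ` to `ℕ`, taking value `q` beyond `k-2`. -/
def extWR (k q : ℕ) (y : Fin (k-1) → ℝ) : ℕ → ℝ := fun n =>
  if h : n < k - 1 then y ⟨n, h⟩ else (q : ℝ)

/-- The map `φ` extended to `ℝ^{k-1}` by the same formula. -/
def phiR (k q : ℕ) (y : Fin (k-1) → ℝ) : Fin k → ℝ := fun i =>
  extWR k q y (i : ℕ) - (if (i : ℕ) = 0 then 0 else extWR k q y ((i : ℕ) - 1))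


def prefixSum {k : ℕ} (d : Fin k → ℤ) (m : ℕ) : ℤ :=
  ∑ i ∈ univ.filter (fun i : Fin k => (i : ℕ) < m), d i

section PrefixSum

variable {k : ℕ}

@[simp]
lemma prefixSum_zero (d : Fin k → ℤ) : prefixSum d 0 = 0 := by
  simp [prefixSum]

lemma prefixSum_succ_of_lt (d : Fin k → ℤ) {m : ℕ} (hm : m < k) :
    prefixSum d (m + 1) = prefixSum d m + d ⟨m, hm⟩ := by
  have hfilter : univ.filter (fun i : Fin k => (i : ℕ) < m + 1) =
      insert ⟨m, hm⟩ (univ.filter (fun i : Fin k => (i : ℕ) < m)) := by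
    ext i
    simp only [mem_filter, mem_univ, true_and, mem_insert, Fin.ext_iff]
    omega
  rw [prefixSum, hfilter, sum_insert (by simp), add_comm, prefixSum]

lemma prefixSum_succ (d : Fin k → ℤ) (i : Fin k) :
    prefixSum d (i + 1) = prefixSum d i + d i :=
  prefixSum_succ_of_lt d i.isLt

lemma prefixSum_of_le (d : Fin k → ℤ) {m : ℕ} (hm : k ≤ m) :
    prefixSum d m = ∑ i, d i := by
  rw [prefixSum, filter_true_of_mem fun i _ => by omega]

lemma prefixSum_sub (d e : Fin k → ℤ) (m : ℕ) :
    prefixSum (d - e) m = prefixSum d m - prefixSum e m :=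
  sum_sub_distrib _ _

lemma prefixSum_mono {d : Fin k → ℤ} (hd : ∀ i, 0 ≤ d i) : Monotone (prefixSum d) :=
  fun _ _ hab => sum_le_sum_of_subset_of_nonneg
    (monotone_filter_right _ fun _ _ h => lt_of_lt_of_le h hab) fun i _ _ => hd i

lemma prefixSum_eq_of_forall_eq_zero {d : Fin k → ℤ} {a b : ℕ} (hab : a ≤ b)
    (h : ∀ l : Fin k, a ≤ l → (l : ℕ) < b → d l = 0) :
    prefixSum d b = prefixSum d a := by
  induction b, hab using Nat.le_induction with
  | base => rfl
  | succ b hab ih =>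
    rw [← ih fun l hl hlb => h l hl (by omega)]
    by_cases hb : b < k
    · rw [prefixSum_succ_of_lt d hb, h ⟨b, hb⟩ hab (by simp), add_zero]
    · rw [prefixSum_of_le d (by omega), prefixSum_of_le d (by omega)]

lemma card_filter_eq_one_eq_card_filter_eq_neg_one {d : Fin k → ℤ}
    (hd : ∀ i, d i = -1 ∨ d i = 0 ∨ d i = 1) (hsum : ∑ i, d i = 0) :
    (univ.filter (fun i => d i = 1)).card = (univ.filter (fun i => d i = -1)).card := by
  have hsplit : ∑ i, d i = (∑ i, if d i = 1 then (1 : ℤ) else 0) -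
      ∑ i, if d i = -1 then (1 : ℤ) else 0 := by
    rw [← sum_sub_distrib]
    refine sum_congr rfl fun i _ => ?_
    rcases hd i with h | h | h <;> simp [h]
  rw [sum_boole, sum_boole, hsum] at hsplit
  omega

/-- Consecutive nonzero entries of an alternating sequence cancel. -/
lemma AltSign.prefixSum_sub_eq_zero_or_eq_last {d : Fin k → ℤ} (halt : AltSign d)
    {a b : ℕ} (hab : a ≤ b) :
    prefixSum d b - prefixSum d a = 0 ∨
      ∃ L : Fin k, a ≤ L ∧ (L : ℕ) < b ∧ (∀ l : Fin k, L < l → (l : ℕ) < b → d l = 0) ∧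
        prefixSum d b - prefixSum d a = d L := by
  induction b, hab using Nat.le_induction with
  | base => simp
  | succ b hab ih =>
    by_cases hb : b < k
    swap
    · rw [prefixSum_of_le d (by omega : k ≤ b + 1), ← prefixSum_of_le d (by omega : k ≤ b)]
      refine ih.imp_right fun ⟨L, haL, hLb, hzero, hL⟩ => ⟨L, haL, by omega, ?_, hL⟩
      exact fun l hLl _ => hzero l hLl (by omega)
    rw [prefixSum_succ_of_lt d hb]
    set j : Fin k := ⟨b, hb⟩
    by_cases hj : d j = 0
    · rw [hj, add_zero]
      refine ih.imp_right fun ⟨L, haL, hLb, hzero, hL⟩ => ⟨L, haL, by omega, ?_, hL⟩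
      intro l hLl hlb
      rcases Nat.lt_succ_iff_lt_or_eq.mp hlb with hlb | hlb
      · exact hzero l hLl hlb
      · rwa [show l = j from Fin.ext hlb]
    by_cases hprev : prefixSum d b - prefixSum d a = 0
    · refine Or.inr ⟨j, hab, by simp [j], fun l hjl hlb => ?_, by omega⟩
      exact absurd hlb (by simp only [Fin.lt_def, j] at hjl; omega)
    obtain ⟨L, -, hLb, hzero, hL⟩ := ih.resolve_left hprev
    have := halt L j hLb (by omega) hj hzero
    left
    omega

lemma AltSign.abs_prefixSum_sub_le_one {d : Fin k → ℤ} (halt : AltSign d)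
    (hd : ∀ i, d i = -1 ∨ d i = 0 ∨ d i = 1) (a b : ℕ) :
    |prefixSum d b - prefixSum d a| ≤ 1 := by
  wlog hab : a ≤ b generalizing a b
  · rw [abs_sub_comm]; exact this b a (by omega)
  rcases halt.prefixSum_sub_eq_zero_or_eq_last hab with h | ⟨L, -, -, -, h⟩
  · simp [h]
  · rw [h, abs_le]; have := hd L; omega

lemma entries_and_altSign_of_prefixSum_two_valued {d : Fin k → ℤ} (c : ℤ)
    (h : ∀ m, prefixSum d m = c ∨ prefixSum d m = c + 1) :
    (∀ i, d i = -1 ∨ d i = 0 ∨ d i = 1) ∧ AltSign d := by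
  refine ⟨fun i => ?_, fun i j hij hi hj hzero => ?_⟩
  · have := prefixSum_succ d i
    have := h i; have := h (i + 1)
    omega
  · have hconst : prefixSum d j = prefixSum d (i + 1) :=
      prefixSum_eq_of_forall_eq_zero (Fin.lt_def.mp hij)
        fun l hil hlj => hzero l (Fin.lt_def.mpr hil) (Fin.lt_def.mpr hlj)
    have := prefixSum_succ d i; have := prefixSum_succ d j
    have := h i; have := h (i + 1); have := h j; have := h (j + 1)
    omega

theorem entries_and_altSign_iff_prefixSum (d : Fin k → ℤ) :
    ((∀ i, d i = -1 ∨ d i = 0 ∨ d i = 1) ∧ AltSign d) ↔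
      (∀ m, prefixSum d m = 0 ∨ prefixSum d m = 1) ∨
        (∀ m, prefixSum d m = -1 ∨ prefixSum d m = 0) := by
  constructor
  · rintro ⟨hd, halt⟩
    have hbound := halt.abs_prefixSum_sub_le_one hd
    by_cases hone : ∃ m, prefixSum d m = 1
    · obtain ⟨m, hm⟩ := hone
      refine Or.inl fun n => ?_
      have h0 := abs_le.mp (hbound 0 n); have hm' := abs_le.mp (hbound m n)
      simp only [prefixSum_zero] at h0
      omega
    · refine Or.inr fun n => ?_
      have h0 := abs_le.mp (hbound 0 n)
      simp only [prefixSum_zero] at h0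
      have := not_exists.mp hone n
      omega
  · rintro (h | h)
    · exact entries_and_altSign_of_prefixSum_two_valued 0 (by simpa using h)
    · exact entries_and_altSign_of_prefixSum_two_valued (-1) fun m => by have := h m; omega

end PrefixSum

section Phi

variable {k q : ℕ}

lemma extW_of_lt (w : Fin (k-1) → ℤ) {n : ℕ} (h : n < k - 1) : extW k q w n = w ⟨n, h⟩ :=
  dif_pos h

lemma extW_of_le (w : Fin (k-1) → ℤ) {n : ℕ} (h : k - 1 ≤ n) : extW k q w n = q :=
  dif_neg (by omega)

lemma extW_nonneg {w : Fin (k-1) → ℤ} (hw : inW k q w) (n : ℕ) : 0 ≤ extW k q w n := by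
  unfold extW
  split
  · exact hw.1 _
  · positivity

lemma extW_mono {w : Fin (k-1) → ℤ} (hw : inW k q w) : Monotone (extW k q w) := by
  intro a b hab
  by_cases hb : b < k - 1
  · rw [extW_of_lt w (by omega : a < k - 1), extW_of_lt w hb]
    exact hw.2.2 _ _ (Fin.mk_le_mk.mpr hab)
  · rw [extW_of_le w (by omega : k - 1 ≤ b)]
    by_cases ha : a < k - 1
    · rw [extW_of_lt w ha]; exact hw.2.1 _
    · rw [extW_of_le w (by omega)]

lemma psi_apply_eq_prefixSum (x : Fin k → ℤ) (j : Fin (k-1)) :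
    psi k x j = prefixSum x (j + 1) := by
  simp only [psi, prefixSum, Nat.lt_succ_iff]

lemma prefixSum_phi_succ (hk : 0 < k) (w : Fin (k-1) → ℤ) (m : ℕ) :
    prefixSum (phi k q w) (m + 1) = extW k q w m := by
  induction m with
  | zero => simp [prefixSum_succ_of_lt _ hk, phi]
  | succ m ih =>
    by_cases hm : m + 1 < k
    · rw [prefixSum_succ_of_lt _ hm, ih]
      simp [phi]
    · rw [prefixSum_of_le _ (by omega), ← prefixSum_of_le _ (by omega : k ≤ m + 1), ih,
        extW_of_le w (by omega), extW_of_le w (by omega)]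

lemma sum_phi (hk : 0 < k) (w : Fin (k-1) → ℤ) : ∑ i, phi k q w i = q := by
  have h := prefixSum_phi_succ (q := q) hk w (k - 1)
  rwa [Nat.sub_add_cancel hk, prefixSum_of_le _ le_rfl, extW_of_le w le_rfl] at h

lemma inSimplex_phi (hk : 0 < k) {w : Fin (k-1) → ℤ} (hw : inW k q w) :
    inSimplex k q (phi k q w) := by
  refine ⟨fun i => ?_, sum_phi hk w⟩
  simp only [phi]
  split_ifs with h0
  · simpa using extW_nonneg hw i
  · exact sub_nonneg.mpr (extW_mono hw (Nat.sub_le _ _))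

lemma psi_phi (hk : 0 < k) (w : Fin (k-1) → ℤ) : psi k (phi k q w) = w := by
  ext j
  rw [psi_apply_eq_prefixSum, prefixSum_phi_succ hk, extW_of_lt w j.isLt]

lemma extW_psi {v : Fin k → ℤ} (hv : inSimplex k q v) (n : ℕ) :
    extW k q (psi k v) n = prefixSum v (n + 1) := by
  by_cases hn : n < k - 1
  · rw [extW_of_lt _ hn, psi_apply_eq_prefixSum]
  · rw [extW_of_le _ (by omega), prefixSum_of_le _ (by omega), hv.2]

lemma phi_psi {v : Fin k → ℤ} (hv : inSimplex k q v) : phi k q (psi k v) = v := by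
  ext i
  have hsucc := prefixSum_succ v i
  simp only [phi, extW_psi hv]
  split_ifs with h0
  · rw [h0] at hsucc ⊢
    simpa using hsucc
  · rw [Nat.sub_add_cancel (Nat.pos_of_ne_zero h0), hsucc]
    ring

lemma inW_psi (hk : 0 < k) {v : Fin k → ℤ} (hv : inSimplex k q v) : inW k q (psi k v) := by
  have hmono := prefixSum_mono hv.1
  refine ⟨fun j => ?_, fun j => ?_, fun i j hij => ?_⟩
  · rw [psi_apply_eq_prefixSum, ← prefixSum_zero v]
    exact hmono (Nat.zero_le _)
  · rw [psi_apply_eq_prefixSum, ← hv.2, ← prefixSum_of_le v le_rfl]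
    exact hmono (by omega)
  · rw [psi_apply_eq_prefixSum, psi_apply_eq_prefixSum]
    exact hmono (by simpa using Fin.le_def.mp hij)

lemma forall_prefixSum_phi_sub_iff (hk : 0 < k) (w1 w2 : Fin (k-1) → ℤ) {p : ℤ → Prop}
    (hp : p 0) :
    (∀ m, p (prefixSum (phi k q w1 - phi k q w2) m)) ↔ ∀ i, p (w1 i - w2 i) := by
  simp only [prefixSum_sub]
  constructor
  · intro h i
    simpa [prefixSum_phi_succ hk, extW_of_lt _ i.isLt] using h (i + 1)
  · rintro h (_ | n)
    · simpa using hp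
    rw [prefixSum_phi_succ hk, prefixSum_phi_succ hk]
    by_cases hn : n < k - 1
    · simpa [extW_of_lt _ hn] using h ⟨n, hn⟩
    · simpa [extW_of_le _ (not_lt.mp hn)] using hp

lemma adjG_phi_iff (hk : 0 < k) {w1 w2 : Fin (k-1) → ℤ} (hw1 : inW k q w1) (hw2 : inW k q w2)
    (hne : w1 ≠ w2) :
    AdjG k q (phi k q w1) (phi k q w2) ↔
      (∀ i, (phi k q w1 - phi k q w2) i = -1 ∨ (phi k q w1 - phi k q w2) i = 0 ∨
        (phi k q w1 - phi k q w2) i = 1) ∧ AltSign (phi k q w1 - phi k q w2) := by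
  have hphi : phi k q w1 ≠ phi k q w2 := fun h => hne <| by
    rw [← psi_phi hk w1, ← psi_phi hk w2, h]
  have hsum : ∑ i, (phi k q w1 - phi k q w2) i = 0 := by
    simp [sum_sub_distrib, sum_phi hk]
  refine ⟨fun ⟨_, _, _, hd, _, halt⟩ => ⟨hd, halt⟩, fun ⟨hd, halt⟩ => ?_⟩
  exact ⟨hphi, inSimplex_phi hk hw1, inSimplex_phi hk hw2, hd,
    card_filter_eq_one_eq_card_filter_eq_neg_one hd hsum, halt⟩

end Phi

theorem phi_graph_iso_general (k q : ℕ) (hk : 2 ≤ k) :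
    Set.BijOn (phi k q) {w : Fin (k-1) → ℤ | inW k q w}
      {v : Fin k → ℤ | inSimplex k q v} ∧
    ∀ w1 w2 : Fin (k-1) → ℤ, inW k q w1 → inW k q w2 → w1 ≠ w2 →
      (AdjG'' k q w1 w2 ↔ AdjG k q (phi k q w1) (phi k q w2)) := by
  have hk0 : 0 < k := by omega
  refine ⟨Set.InvOn.bijOn ⟨fun w _ => psi_phi hk0 w, fun v hv => phi_psi hv⟩
    (fun w hw => inSimplex_phi hk0 hw) (fun v hv => inW_psi hk0 hv), fun w1 w2 hw1 hw2 hne => ?_⟩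
  set d := phi k q w1 - phi k q w2
  calc AdjG'' k q w1 w2
      ↔ (∀ i, w1 i - w2 i = 0 ∨ w1 i - w2 i = 1) ∨
          (∀ i, w1 i - w2 i = -1 ∨ w1 i - w2 i = 0) := by
        simp only [AdjG'', ne_eq, hne, not_false_eq_true, hw1, hw2, true_and]
    _ ↔ (∀ m, prefixSum d m = 0 ∨ prefixSum d m = 1) ∨
          (∀ m, prefixSum d m = -1 ∨ prefixSum d m = 0) :=
        (or_congr
          (forall_prefixSum_phi_sub_iff hk0 w1 w2 (p := fun x => x = 0 ∨ x = 1) (.inl rfl))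
          (forall_prefixSum_phi_sub_iff hk0 w1 w2 (p := fun x => x = -1 ∨ x = 0) (.inr rfl))).symm
    _ ↔ _ := (entries_and_altSign_iff_prefixSum _).symm
    _ ↔ AdjG k q (phi k q w1) (phi k q w2) := (adjG_phi_iff hk0 hw1 hw2 hne).symm

/-- `φ` restricted to `W_{k,q}` is a graph isomorphism from `G''_k`
onto `G_k`: it is a bijection from `W_{k,q}` onto `Δ_{k,q} ∩ ℤ^k`, and distinct
`w¹, w²` are adjacent in `G''_k` iff `φ(w¹), φ(w²)` are adjacent in `G_k`. -/
theorem phi_graph_iso (k q : ℕ) (hk : 2 ≤ k) (hq : 1 ≤ q) :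
    Set.BijOn (phi k q) {w : Fin (k-1) → ℤ | inW k q w}
      {v : Fin k → ℤ | inSimplex k q v} ∧
    ∀ w1 w2 : Fin (k-1) → ℤ, inW k q w1 → inW k q w2 → w1 ≠ w2 →
      (AdjG'' k q w1 w2 ↔ AdjG k q (phi k q w1) (phi k q w2)) :=
  phi_graph_iso_general k q hk
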